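/- arXiv:math/0607236 — 2 statements merged into one kernel-verified Lean document; each statement's English description precedes it below -/
import Mathlib

section
/- On an almost Kähler manifold (M,g,J,κ), the covariant derivative of J along (0,1)-vector fields annihilates (1,0)-vector fields: (∇_{Z̄_i} J) Z_j = 0 for any complex vector fields Z_i, Z_j of type (1,0). -/
noncomputable section

/-- An algebraic (Koszul-style) model of a `2n`-dimensional almost Kähler manifold
`(M, g, J, κ)`.  `Point` is the set of points of `M`, `F` plays the role of the
ring of complex-valued smooth functions on `M`, and `V` plays the role of the
module of complexified smooth vector fields on `M`.  The metric `g`, the almost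
complex structure `J` and the Levi-Civita connection `nabla` are extended
complex-linearly.  `κ(X,Y) = g(JX,Y)` is required to be closed (so that `κ` is a
symplectic form calibrating `J`), i.e. `(M,g,J,κ)` is an almost Kähler manifold. -/
structure AlmostKahler where
  /-- the points of the manifold `M` -/
  Point : Type
  /-- half the real dimension of `M` -/
  n : ℕ
  /-- the ring of complex-valued smooth functions on `M` -/
  F : Type
  [ringF : CommRing F]
  [algF : Algebra ℂ F]
  /-- the module of complexified smooth vector fields on `M` -/
  V : Type
  [grpV : AddCommGroup V]
  [modV : Module F V]
  /-- evaluation of a function at a point -/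
  eval : Point → F → ℂ
  eval_add : ∀ p f h, eval p (f + h) = eval p f + eval p h
  eval_mul : ∀ p f h, eval p (f * h) = eval p f * eval p h
  eval_algebraMap : ∀ p (c : ℂ), eval p (algebraMap ℂ F c) = c
  /-- complex conjugation of functions -/
  conjF : F → F
  conjF_add : ∀ f h, conjF (f + h) = conjF f + conjF h
  conjF_mul : ∀ f h, conjF (f * h) = conjF f * conjF h
  conjF_conjF : ∀ f, conjF (conjF f) = f
  conjF_algebraMap : ∀ c : ℂ, conjF (algebraMap ℂ F c) = algebraMap ℂ F (starRingEnd ℂ c)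
  eval_conjF : ∀ p f, eval p (conjF f) = starRingEnd ℂ (eval p f)
  /-- complex conjugation of vector fields -/
  conjV : V → V
  conjV_add : ∀ X Y, conjV (X + Y) = conjV X + conjV Y
  conjV_smul : ∀ (f : F) (X : V), conjV (f • X) = conjF f • conjV X
  conjV_conjV : ∀ X, conjV (conjV X) = X
  /-- the action of a vector field on a function, as a derivation -/
  deriv : V → F → F
  deriv_add_left : ∀ X Y f, deriv (X + Y) f = deriv X f + deriv Y f
  deriv_smul_left : ∀ (h : F) (X : V) (f : F), deriv (h • X) f = h * deriv X f
  deriv_add : ∀ X f h, deriv X (f + h) = deriv X f + deriv X h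
  deriv_mul : ∀ X f h, deriv X (f * h) = f * deriv X h + h * deriv X f
  deriv_algebraMap : ∀ X (c : ℂ), deriv X (algebraMap ℂ F c) = 0
  deriv_conj : ∀ X f, deriv (conjV X) (conjF f) = conjF (deriv X f)
  /-- vector fields are determined by their action on functions -/
  deriv_ext : ∀ X Y : V, (∀ f, deriv X f = deriv Y f) → X = Y
  /-- the Lie bracket of vector fields -/
  bracket : V → V → V
  bracket_deriv : ∀ X Y f, deriv (bracket X Y) f = deriv X (deriv Y f) - deriv Y (deriv X f)
  /-- the (complex bilinear extension of the) Riemannian metric `g` -/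
  g : V → V → F
  g_add_left : ∀ X Y Z, g (X + Y) Z = g X Z + g Y Z
  g_smul_left : ∀ (f : F) (X Y : V), g (f • X) Y = f * g X Y
  g_symm : ∀ X Y, g X Y = g Y X
  g_conj : ∀ X Y, conjF (g X Y) = g (conjV X) (conjV Y)
  /-- positivity of the underlying Riemannian metric -/
  g_pos : ∀ p X, 0 ≤ (eval p (g X (conjV X))).re
  g_nondeg : ∀ X : V, (∀ Y, g X Y = 0) → X = 0
  /-- the almost complex structure `J` (complex linearly extended) -/
  J : V → V
  J_add : ∀ X Y, J (X + Y) = J X + J Y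
  J_smul : ∀ (f : F) (X : V), J (f • X) = f • J X
  J_J : ∀ X, J (J X) = -X
  J_conj : ∀ X, conjV (J X) = J (conjV X)
  /-- `g` is Hermitian with respect to `J`; equivalently `J` is calibrated by the
  fundamental `2`-form `κ(X,Y) = g(JX,Y)`, i.e. `g(·,·) = κ(·,J·)` -/
  g_J : ∀ X Y, g (J X) (J Y) = g X Y
  /-- the Levi-Civita connection of `g` (complex linearly extended) -/
  nabla : V → V → V
  nabla_add_left : ∀ X Y Z, nabla (X + Y) Z = nabla X Z + nabla Y Z
  nabla_smul_left : ∀ (f : F) (X Y : V), nabla (f • X) Y = f • nabla X Y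
  nabla_add_right : ∀ X Y Z, nabla X (Y + Z) = nabla X Y + nabla X Z
  nabla_leibniz : ∀ (X : V) (f : F) (Y : V), nabla X (f • Y) = deriv X f • Y + f • nabla X Y
  nabla_torsion_free : ∀ X Y, nabla X Y - nabla Y X = bracket X Y
  nabla_metric : ∀ X Y Z, deriv X (g Y Z) = g (nabla X Y) Z + g Y (nabla X Z)
  nabla_conj : ∀ X Y, conjV (nabla X Y) = nabla (conjV X) (conjV Y)
  /-- the fundamental `2`-form `κ(X,Y) = g(JX,Y)` is closed: `dκ = 0`,
  so `κ` is a symplectic form on `M` -/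
  kappa_closed : ∀ X Y Z,
    deriv X (g (J Y) Z) - deriv Y (g (J X) Z) + deriv Z (g (J X) Y)
      - g (J (bracket X Y)) Z + g (J (bracket X Z)) Y - g (J (bracket Y Z)) X = 0

namespace AlmostKahler

instance (M : AlmostKahler) : CommRing M.F := M.ringF
instance (M : AlmostKahler) : Algebra ℂ M.F := M.algF
instance (M : AlmostKahler) : AddCommGroup M.V := M.grpV
instance (M : AlmostKahler) : Module M.F M.V := M.modV

variable (M : AlmostKahler)

/-- a constant function on `M` -/
def cF (c : ℂ) : M.F := algebraMap ℂ M.F c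

/-- scalar multiplication of a vector field by a complex constant -/
def csmul (c : ℂ) (X : M.V) : M.V := algebraMap ℂ M.F c • X

/-- a real vector field: one fixed by conjugation -/
def IsReal (X : M.V) : Prop := M.conjV X = X

/-- a vector field of type `(1,0)`: a section of the `i`-eigenbundle of `J` -/
def IsHolo (Z : M.V) : Prop := M.J Z = M.csmul Complex.I Z

/-- a vector field of type `(0,1)`: a section of the `(−i)`-eigenbundle of `J` -/
def IsAntiHolo (W : M.V) : Prop := M.J W = M.csmul (-Complex.I) W

/-- the vector field `X` vanishes at the point `p` -/
def VanishesAt (p : M.Point) (X : M.V) : Prop := ∀ f, M.eval p (M.deriv X f) = 0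

/-- the value of the vector field `X` at the point `p` is of type `(0,1)` -/
def AntiHoloAt (p : M.Point) (X : M.V) : Prop :=
  M.VanishesAt p (M.J X + M.csmul Complex.I X)

/-- the projection of a vector field onto its `(0,1)`-part `W^{0,1}` -/
def proj01 (W : M.V) : M.V := M.csmul (1/2) (W + M.csmul Complex.I (M.J W))

/-- the Nijenhuis tensor `N_J(X,Y) = [JX,JY] − J[JX,Y] − J[X,JY] − [X,Y]` -/
def N (X Y : M.V) : M.V :=
  M.bracket (M.J X) (M.J Y) - M.J (M.bracket (M.J X) Y) - M.J (M.bracket X (M.J Y))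
    - M.bracket X Y

/-- `J` is integrable: the Nijenhuis tensor vanishes -/
def Integrable : Prop := ∀ X Y, M.N X Y = 0

/-- `(M,g,J,κ)` is a Kähler manifold: the (`κ`-calibrated) almost complex structure
`J` is integrable, i.e. the Nijenhuis tensor vanishes -/
def IsKahler : Prop := ∀ X Y, M.N X Y = 0

/-- the covariant derivative `(∇_X J)(Y) = ∇_X (JY) − J ∇_X Y` -/
def nablaJ (X Y : M.V) : M.V := M.nabla X (M.J Y) - M.J (M.nabla X Y)

/-- the covariant derivative of the Nijenhuis tensor, `(∇_X N_J)(Y,Z)` -/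
def nablaN (X Y Z : M.V) : M.V :=
  M.nabla X (M.N Y Z) - M.N (M.nabla X Y) Z - M.N Y (M.nabla X Z)

/-- the `(2,1)`-tensor `B(X,Y) = J(∇_X J)Y − (∇_{JX} J)Y` -/
def B (X Y : M.V) : M.V := M.J (M.nablaJ X Y) - M.nablaJ (M.J X) Y

/-- the covariant derivative `(∇_X B)(Y,Z)` -/
def nablaB (X Y Z : M.V) : M.V :=
  M.nabla X (M.B Y Z) - M.B (M.nabla X Y) Z - M.B Y (M.nabla X Z)

/-- the tensor `L(X,Y,Z,W) = g((∇_X B)(Y,Z), W)` -/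
def L (X Y Z W : M.V) : M.F := M.g (M.nablaB X Y Z) W

/-- the Riemann curvature tensor of `g`:
`R(X,Y,Z,W) = g(∇_X ∇_Y Z − ∇_Y ∇_X Z − ∇_{[X,Y]} Z, W)` -/
def R (X Y Z W : M.V) : M.F :=
  M.g (M.nabla X (M.nabla Y Z) - M.nabla Y (M.nabla X Z) - M.nabla (M.bracket X Y) Z) W

/-- the tensor `R^J(X,Y,Z,W) = g(∇_X J∇_Y Z − ∇_Y J∇_X Z − ∇_{[X,Y]} JZ, JW)` -/
def RJ (X Y Z W : M.V) : M.F :=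
  M.g (M.nabla X (M.J (M.nabla Y Z)) - M.nabla Y (M.J (M.nabla X Z))
    - M.nabla (M.bracket X Y) (M.J Z)) (M.J W)

/-- the Hermitian connection `∇̃ = ∇ − (1/2) J ∇J`,
i.e. `∇̃_X Y = ∇_X Y − (1/2) J((∇_X J)Y)` -/
def hnabla (X Y : M.V) : M.V := M.nabla X Y - M.csmul (1/2) (M.J (M.nablaJ X Y))

/-- the torsion of the Hermitian connection -/
def hT (X Y : M.V) : M.V := M.hnabla X Y - M.hnabla Y X - M.bracket X Y

/-- the curvature tensor `R̃` of the Hermitian connection `∇̃` -/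
def hR (X Y Z W : M.V) : M.F :=
  M.g (M.hnabla X (M.hnabla Y Z) - M.hnabla Y (M.hnabla X Z)
    - M.hnabla (M.bracket X Y) Z) W

/-- `Z : Fin M.n → M.V` is a generalized normal holomorphic frame around the
point `o`: a local `(1,0)`-frame around `o` such that
(1) `∇_{Z_k} Z̄_i (o) = 0`;
(2) `∇_{Z_k} Z_i (o)` is of type `(0,1)`;
(3) `G_{r s̄} = g(Z_r, Z̄_s)` satisfies `G_{r s̄}(o) = δ_{rs}` and `dG_{r s̄}[o] = 0`;
(4) `∇_{Z_r} ∇_{Z̄_k} Z_i (o) = 0`. -/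
structure IsGNHF (o : M.Point) (Z : Fin M.n → M.V) : Prop where
  holo : ∀ i, M.IsHolo (Z i)
  frameAt : ∀ W : M.V, M.IsHolo W →
    ∃ c : Fin M.n → ℂ, M.VanishesAt o (W - ∑ i, M.csmul (c i) (Z i))
  cond1 : ∀ k i, M.VanishesAt o (M.nabla (Z k) (M.conjV (Z i)))
  cond2 : ∀ k i, M.AntiHoloAt o (M.nabla (Z k) (Z i))
  cond3a : ∀ r s, M.eval o (M.g (Z r) (M.conjV (Z s))) = if r = s then 1 else 0
  cond3b : ∀ r s X, M.eval o (M.deriv X (M.g (Z r) (M.conjV (Z s)))) = 0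
  cond4 : ∀ r k i, M.VanishesAt o (M.nabla (Z r) (M.nabla (M.conjV (Z k)) (Z i)))

end AlmostKahler

section AuxLemmas

open Complex

variable (M : AlmostKahler)

lemma aux_g_neg_left (X Y : M.V) : M.g (-X) Y = -(M.g X Y) := by
  rw [← neg_one_smul M.F X, M.g_smul_left, neg_one_mul]

lemma aux_g_sub_left (X Y Z : M.V) : M.g (X - Y) Z = M.g X Z - M.g Y Z := by
  rw [sub_eq_add_neg, M.g_add_left, aux_g_neg_left, ← sub_eq_add_neg]

lemma aux_g_add_right (X Y Z : M.V) : M.g X (Y + Z) = M.g X Y + M.g X Z := by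
  rw [M.g_symm, M.g_add_left, M.g_symm Y X, M.g_symm Z X]

lemma aux_g_smul_right (f : M.F) (X Y : M.V) : M.g X (f • Y) = f * M.g X Y := by
  rw [M.g_symm, M.g_smul_left, M.g_symm Y X]

lemma aux_g_neg_right (X Y : M.V) : M.g X (-Y) = -(M.g X Y) := by
  rw [M.g_symm, aux_g_neg_left, M.g_symm Y X]

lemma aux_gJ_left (X Y : M.V) : M.g (M.J X) Y = -(M.g X (M.J Y)) := by
  have h := M.g_J X (M.J Y)
  rw [M.J_J] at h
  have h2 : M.g (M.J X) (-Y) = -(M.g (M.J X) Y) := aux_g_neg_right M _ _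
  linear_combination h2 - h

lemma aux_deriv_zero (X : M.V) : M.deriv X 0 = 0 := by
  have h : (0 : M.F) = algebraMap ℂ M.F 0 := (map_zero _).symm
  rw [h, M.deriv_algebraMap, map_zero]

lemma aux_deriv_neg (X : M.V) (f : M.F) : M.deriv X (-f) = -(M.deriv X f) := by
  have h : M.deriv X (f + (-f)) = M.deriv X f + M.deriv X (-f) := M.deriv_add _ _ _
  rw [add_neg_cancel, aux_deriv_zero] at h
  linear_combination -h

lemma aux_deriv_const_mul (X : M.V) (c : ℂ) (f : M.F) :
    M.deriv X (algebraMap ℂ M.F c * f) = algebraMap ℂ M.F c * M.deriv X f := by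
  rw [M.deriv_mul, M.deriv_algebraMap, mul_zero, add_zero]

lemma aux_half (x : M.F) (hx : x + x = 0) : x = 0 := by
  calc x = (algebraMap ℂ M.F (1/2) + algebraMap ℂ M.F (1/2)) * x := by
        rw [← map_add]; norm_num
    _ = algebraMap ℂ M.F (1/2) * (x + x) := by ring
    _ = 0 := by rw [hx, mul_zero]

lemma aux_cancel_I (x : M.F) (hx : algebraMap ℂ M.F Complex.I * x = 0) : x = 0 := by
  have h1 : (-Complex.I) * Complex.I = 1 := by
    rw [neg_mul, Complex.I_mul_I, neg_neg]
  calc x = (algebraMap ℂ M.F (-Complex.I) * algebraMap ℂ M.F Complex.I) * x := by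
        rw [← map_mul, h1, map_one, one_mul]
    _ = algebraMap ℂ M.F (-Complex.I) * (algebraMap ℂ M.F Complex.I * x) := by ring
    _ = 0 := by rw [hx, mul_zero]

lemma aux_g_holo_holo (Y Z : M.V) (hY : M.IsHolo Y) (hZ : M.IsHolo Z) :
    M.g Y Z = 0 := by
  have hY' : M.J Y = algebraMap ℂ M.F Complex.I • Y := hY
  have hZ' : M.J Z = algebraMap ℂ M.F Complex.I • Z := hZ
  have h := M.g_J Y Z
  rw [hY', hZ', M.g_smul_left, aux_g_smul_right, ← mul_assoc, ← map_mul,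
    Complex.I_mul_I, map_neg, map_one, neg_one_mul] at h
  exact aux_half M _ (by linear_combination -h)

/-- The key identity: on an almost Kähler manifold, for `X` of type `(0,1)` and
`Y`, `Z` of type `(1,0)`, we have `g(∇_X Y, Z) = 0`. -/
lemma aux_key (X Y Z : M.V) (hX : M.J X = M.csmul (-Complex.I) X)
    (hY : M.IsHolo Y) (hZ : M.IsHolo Z) : M.g (M.nabla X Y) Z = 0 := by
  have hX' : M.J X = -(algebraMap ℂ M.F Complex.I • X) := by
    have h : M.J X = algebraMap ℂ M.F (-Complex.I) • X := hX
    rw [h, map_neg, neg_smul]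
  have hY' : M.J Y = algebraMap ℂ M.F Complex.I • Y := hY
  have hZ' : M.J Z = algebraMap ℂ M.F Complex.I • Z := hZ
  have gYZ : M.g Y Z = 0 := aux_g_holo_holo M Y Z hY hZ
  -- metric compatibility
  have e1 := M.nabla_metric X Y Z
  rw [gYZ, aux_deriv_zero] at e1
  have e2 := M.nabla_metric Y X Z
  have e3 := M.nabla_metric Z X Y
  -- torsion-freeness
  have b1 : M.g (M.bracket X Y) Z = M.g (M.nabla X Y) Z - M.g (M.nabla Y X) Z := by
    rw [← M.nabla_torsion_free, aux_g_sub_left]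
  have b2 : M.g (M.bracket X Z) Y = M.g (M.nabla X Z) Y - M.g (M.nabla Z X) Y := by
    rw [← M.nabla_torsion_free, aux_g_sub_left]
  have b3 : M.g (M.bracket Y Z) X = M.g (M.nabla Y Z) X - M.g (M.nabla Z Y) X := by
    rw [← M.nabla_torsion_free, aux_g_sub_left]
  -- symmetry of g
  have s1 : M.g Y (M.nabla X Z) = M.g (M.nabla X Z) Y := M.g_symm _ _
  have s2 : M.g X (M.nabla Y Z) = M.g (M.nabla Y Z) X := M.g_symm _ _
  have s3 : M.g X (M.nabla Z Y) = M.g (M.nabla Z Y) X := M.g_symm _ _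
  -- closedness of κ
  have K := M.kappa_closed X Y Z
  have d1 : M.deriv X (M.g (M.J Y) Z) = 0 := by
    rw [hY', M.g_smul_left, gYZ, mul_zero, aux_deriv_zero]
  have d2 : M.deriv Y (M.g (M.J X) Z)
      = -(algebraMap ℂ M.F Complex.I * M.deriv Y (M.g X Z)) := by
    rw [hX', aux_g_neg_left, M.g_smul_left, aux_deriv_neg, aux_deriv_const_mul]
  have d3 : M.deriv Z (M.g (M.J X) Y)
      = -(algebraMap ℂ M.F Complex.I * M.deriv Z (M.g X Y)) := by
    rw [hX', aux_g_neg_left, M.g_smul_left, aux_deriv_neg, aux_deriv_const_mul]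
  have h4 : M.g (M.J (M.bracket X Y)) Z
      = -(algebraMap ℂ M.F Complex.I * M.g (M.bracket X Y) Z) := by
    rw [aux_gJ_left, hZ', aux_g_smul_right]
  have h5 : M.g (M.J (M.bracket X Z)) Y
      = -(algebraMap ℂ M.F Complex.I * M.g (M.bracket X Z) Y) := by
    rw [aux_gJ_left, hY', aux_g_smul_right]
  have h6 : M.g (M.J (M.bracket Y Z)) X
      = algebraMap ℂ M.F Complex.I * M.g (M.bracket Y Z) X := by
    rw [aux_gJ_left, hX', aux_g_neg_right, aux_g_smul_right, neg_neg]
  rw [d1, d2, d3, h4, h5, h6] at K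
  have star : M.deriv Y (M.g X Z) - M.deriv Z (M.g X Y) + M.g (M.bracket X Y) Z
      - M.g (M.bracket X Z) Y - M.g (M.bracket Y Z) X = 0 :=
    aux_cancel_I M _ (by linear_combination K)
  have hS : M.g (M.nabla X Y) Z + M.g (M.nabla X Y) Z = 0 := by
    linear_combination star - e2 + e3 - b1 + b2 + b3 - s2 + s3 - s1 - e1
  exact aux_half M _ hS

end AuxLemmas

/-- On an almost Kähler manifold `(M,g,J,κ)`, the covariant derivative of `J` along
`(0,1)`-vector fields annihilates `(1,0)`-vector fields: `(∇_{Z̄_i} J) Z_j = 0` for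
any complex vector fields `Z_i, Z_j` of type `(1,0)`. -/
theorem nablaJ_conj_holo_eq_zero (M : AlmostKahler) (Zi Zj : M.V)
    (hi : M.IsHolo Zi) (hj : M.IsHolo Zj) :
    M.nablaJ (M.conjV Zi) Zj = 0 := by
  have hX : M.J (M.conjV Zi) = M.csmul (-Complex.I) (M.conjV Zi) := by
    have h := congrArg M.conjV hi
    rw [M.J_conj] at h
    rw [h]
    show M.conjV (algebraMap ℂ M.F Complex.I • Zi)
      = algebraMap ℂ M.F (-Complex.I) • M.conjV Zi
    rw [M.conjV_smul, M.conjF_algebraMap, Complex.conj_I]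
  apply M.g_nondeg
  intro W
  have hj' : M.J Zj = algebraMap ℂ M.F Complex.I • Zj := hj
  have n1 : M.nabla (M.conjV Zi) (M.J Zj)
      = algebraMap ℂ M.F Complex.I • M.nabla (M.conjV Zi) Zj := by
    rw [hj', M.nabla_leibniz, M.deriv_algebraMap, zero_smul, zero_add]
  have hUholo : M.IsHolo (algebraMap ℂ M.F Complex.I • W + M.J W) := by
    show M.J (algebraMap ℂ M.F Complex.I • W + M.J W)
      = algebraMap ℂ M.F Complex.I • (algebraMap ℂ M.F Complex.I • W + M.J W)
    rw [M.J_add, M.J_smul, M.J_J, smul_add, smul_smul, ← map_mul,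
      Complex.I_mul_I, map_neg, map_one, neg_one_smul]
    abel
  have hkey := aux_key M (M.conjV Zi) Zj (algebraMap ℂ M.F Complex.I • W + M.J W)
    hX hj hUholo
  have expand : M.g (M.nabla (M.conjV Zi) Zj) (algebraMap ℂ M.F Complex.I • W + M.J W)
      = algebraMap ℂ M.F Complex.I * M.g (M.nabla (M.conjV Zi) Zj) W
        + M.g (M.nabla (M.conjV Zi) Zj) (M.J W) := by
    rw [aux_g_add_right, aux_g_smul_right]
  show M.g (M.nabla (M.conjV Zi) (M.J Zj) - M.J (M.nabla (M.conjV Zi) Zj)) W = 0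
  rw [aux_g_sub_left, n1, M.g_smul_left,
    aux_gJ_left M (M.nabla (M.conjV Zi) Zj) W]
  linear_combination hkey - expand
end
end

section
/- Let (M,g,J,κ) be an almost Kähler manifold, B(X,Y) = J(∇_X J)Y − (∇_{JX} J)Y, and L(X,Y,Z,W) = g((∇_X B)(Y,Z), W). Then for any (1,0)-vector fields Z_i, Z_j, Z_r, Z_s one has L(Z̄_i, Z_j, Z_r, Z̄_s) = L(Z_j, Z̄_i, Z̄_s, Z_r), and moreover L(Z_i, Z̄_j, Z_r, Z_s) = L(Z_i, Z_j, Z̄_r, Z_s) = L(Z_i, Z_j, Z_r, Z̄_s) = 0. -/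
noncomputable section

namespace AlmostKahler

variable (M : AlmostKahler)

lemma cF_mul (a b : ℂ) : M.cF a * M.cF b = M.cF (a*b) := by
  unfold cF; rw [map_mul]

lemma cF_one : M.cF 1 = 1 := map_one _

lemma cF_neg (a : ℂ) : M.cF (-a) = - M.cF a := by unfold cF; rw [map_neg]

lemma half (a b : M.F) (h : a + a = b + b) : a = b := by
  have h3 : M.cF 2 = (2 : M.F) := by unfold cF; rw [map_ofNat]
  have h2 : M.cF 2 * (a - b) = 0 := by rw [h3]; linear_combination h
  have h4 : a - b = (M.cF (1/2) * M.cF 2) * (a - b) := by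
    rw [cF_mul]; norm_num [cF_one]
  have h5 : a - b = 0 := by rw [h4, mul_assoc, h2, mul_zero]
  linear_combination h5

lemma csmul_csmul (a b : ℂ) (X : M.V) :
    M.csmul a (M.csmul b X) = M.csmul (a*b) X := by
  unfold csmul; rw [smul_smul, ← map_mul]

lemma csmul_one (X : M.V) : M.csmul 1 X = X := by
  unfold csmul; rw [map_one, one_smul]

lemma csmul_cancel (a b : ℂ) (X : M.V) (hab : a ≠ b)
    (h : M.csmul a X = M.csmul b X) : X = 0 := by
  have h2 : M.csmul (a - b) X = 0 := by
    unfold csmul at h ⊢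
    rw [map_sub, sub_smul, h, sub_self]
  have h3 : X = M.csmul ((a-b)⁻¹) (M.csmul (a-b) X) := by
    rw [csmul_csmul, inv_mul_cancel₀ (sub_ne_zero.mpr hab), csmul_one]
  rw [h3, h2]
  unfold csmul; rw [smul_zero]

end AlmostKahler

namespace AlmostKahler

variable (M : AlmostKahler)

lemma g_zero_left (Y : M.V) : M.g 0 Y = 0 := by
  have h := M.g_add_left 0 0 Y
  rw [add_zero] at h
  linear_combination -h

lemma g_neg_left (X Y : M.V) : M.g (-X) Y = - M.g X Y := by
  have h := M.g_add_left X (-X) Y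
  rw [add_neg_cancel, g_zero_left] at h
  linear_combination -h

lemma g_sub_left (X Y Z : M.V) : M.g (X - Y) Z = M.g X Z - M.g Y Z := by
  rw [sub_eq_add_neg, M.g_add_left, g_neg_left, sub_eq_add_neg]

lemma g_add_right (X Y Z : M.V) : M.g X (Y + Z) = M.g X Y + M.g X Z := by
  rw [M.g_symm, M.g_add_left, M.g_symm Y, M.g_symm Z]

lemma g_neg_right (X Y : M.V) : M.g X (-Y) = - M.g X Y := by
  rw [M.g_symm, g_neg_left, M.g_symm]

lemma g_sub_right (X Y Z : M.V) : M.g X (Y - Z) = M.g X Y - M.g X Z := by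
  rw [M.g_symm, g_sub_left, M.g_symm Y, M.g_symm Z X]

lemma g_zero_right (X : M.V) : M.g X 0 = 0 := by rw [M.g_symm, g_zero_left]

lemma g_csmul_left (c : ℂ) (X Y : M.V) :
    M.g (M.csmul c X) Y = M.cF c * M.g X Y := M.g_smul_left _ _ _

lemma g_csmul_right (c : ℂ) (X Y : M.V) :
    M.g X (M.csmul c Y) = M.cF c * M.g X Y := by
  rw [M.g_symm, g_csmul_left, M.g_symm]

lemma J_zero : M.J 0 = 0 := by
  have h := M.J_add 0 0
  rw [add_zero] at h
  exact ((add_eq_left).mp h.symm)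

lemma J_neg (X : M.V) : M.J (-X) = - M.J X := by
  have h := M.J_add X (-X)
  rw [add_neg_cancel, J_zero] at h
  exact (neg_eq_of_add_eq_zero_right h.symm).symm

lemma J_sub (X Y : M.V) : M.J (X - Y) = M.J X - M.J Y := by
  rw [sub_eq_add_neg, M.J_add, J_neg, sub_eq_add_neg]

lemma J_csmul (c : ℂ) (X : M.V) : M.J (M.csmul c X) = M.csmul c (M.J X) :=
  M.J_smul _ _

lemma nabla_zero_right (X : M.V) : M.nabla X 0 = 0 := by
  have h := M.nabla_add_right X 0 0
  rw [add_zero] at h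
  exact ((add_eq_left).mp h.symm)

lemma nabla_neg_right (X Y : M.V) : M.nabla X (-Y) = - M.nabla X Y := by
  have h := M.nabla_add_right X Y (-Y)
  rw [add_neg_cancel, nabla_zero_right] at h
  exact (neg_eq_of_add_eq_zero_right h.symm).symm

lemma nabla_sub_right (X Y Z : M.V) :
    M.nabla X (Y - Z) = M.nabla X Y - M.nabla X Z := by
  rw [sub_eq_add_neg, M.nabla_add_right, nabla_neg_right, sub_eq_add_neg]

lemma nabla_csmul_right (c : ℂ) (X Y : M.V) :
    M.nabla X (M.csmul c Y) = M.csmul c (M.nabla X Y) := by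
  unfold csmul
  rw [M.nabla_leibniz, M.deriv_algebraMap, zero_smul, zero_add]

lemma deriv_zero (X : M.V) : M.deriv X 0 = 0 := by
  have h := M.deriv_add X 0 0
  rw [add_zero] at h
  exact ((add_eq_left).mp h.symm)

end AlmostKahler

namespace AlmostKahler

variable (M : AlmostKahler)

lemma nablaJ_expand (X Y : M.V) :
    M.nabla X (M.J Y) = M.nablaJ X Y + M.J (M.nabla X Y) := by
  unfold nablaJ; abel

lemma nablaJ_J (X Y : M.V) : M.nablaJ X (M.J Y) = - M.J (M.nablaJ X Y) := by
  unfold nablaJ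
  rw [M.J_J, nabla_neg_right, J_sub, M.J_J]
  abel

lemma nablaJ_csmul₁ (c : ℂ) (X Y : M.V) :
    M.nablaJ (M.csmul c X) Y = M.csmul c (M.nablaJ X Y) := by
  unfold nablaJ csmul
  rw [M.nabla_smul_left, M.nabla_smul_left, M.J_smul, smul_sub]

lemma nablaJ_csmul₂ (c : ℂ) (X Y : M.V) :
    M.nablaJ X (M.csmul c Y) = M.csmul c (M.nablaJ X Y) := by
  unfold nablaJ
  rw [J_csmul, nabla_csmul_right, nabla_csmul_right, J_csmul]
  unfold csmul
  rw [smul_sub]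

lemma gJ_skew (X Y : M.V) : M.g (M.J X) Y = - M.g X (M.J Y) := by
  have h := M.g_J (M.J X) Y
  rw [M.J_J, g_neg_left] at h
  linear_combination -h

lemma gJ_pair (A B : M.V) : M.g (M.J A) B + M.g (M.J B) A = 0 := by
  have h1 := M.gJ_skew A B
  have h2 := M.g_symm (M.J B) A
  linear_combination h1 + h2

lemma D_skew (X Y Z : M.V) :
    M.g (M.nablaJ X Y) Z = - M.g Y (M.nablaJ X Z) := by
  have h0 : M.g (M.J Y) Z + M.g Y (M.J Z) = 0 := by
    have := M.gJ_skew Y Z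
    linear_combination this
  have h := congrArg (M.deriv X) h0
  rw [M.deriv_add, deriv_zero, M.nabla_metric, M.nabla_metric,
      nablaJ_expand, nablaJ_expand, M.g_add_left, g_add_right] at h
  have e1 := M.gJ_skew (M.nabla X Y) Z
  have e2 := M.gJ_skew Y (M.nabla X Z)
  linear_combination h - e1 - e2

lemma closed (X Y Z : M.V) :
    M.g (M.nablaJ X Y) Z - M.g (M.nablaJ Y X) Z + M.g (M.nablaJ Z X) Y = 0 := by
  have h := M.kappa_closed X Y Z
  rw [M.nabla_metric, M.nabla_metric, M.nabla_metric,
      ← M.nabla_torsion_free, ← M.nabla_torsion_free, ← M.nabla_torsion_free,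
      J_sub, J_sub, J_sub, g_sub_left, g_sub_left, g_sub_left,
      nablaJ_expand, nablaJ_expand, nablaJ_expand,
      M.g_add_left, M.g_add_left, M.g_add_left] at h
  have p1 := M.gJ_pair Y (M.nabla X Z)
  have p2 := M.gJ_pair X (M.nabla Y Z)
  have p3 := M.gJ_pair X (M.nabla Z Y)
  linear_combination h - p1 + p2 - p3

lemma m1 (X Y Z : M.V) :
    M.g (M.nablaJ X (M.J Y)) Z = M.g (M.nablaJ X Y) (M.J Z) := by
  rw [nablaJ_J, g_neg_left, gJ_skew, neg_neg]

end AlmostKahler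

namespace AlmostKahler

variable (M : AlmostKahler)

/-- quasi-Kähler identity at the level of `g`:
`g((∇_{JX}J)Y, Z) = g((∇_X J)Y, JZ)` -/
lemma QK_T (X Y Z : M.V) :
    M.g (M.nablaJ (M.J X) Y) Z = M.g (M.nablaJ X Y) (M.J Z) := by
  apply M.half
  have m0 := M.m1 X Y Z
  have c1 := M.closed X Y (M.J Z)
  have c2 := M.closed X (M.J Y) Z
  have c3 := M.closed (M.J X) Y Z
  have c6 := M.closed (M.J X) (M.J Y) (M.J Z)
  have m5 := M.m1 (M.J X) Y (M.J Z)
  rw [M.J_J, g_neg_right] at m5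
  have m7 := M.m1 Y X Z
  have m8 := M.m1 (M.J Y) X (M.J Z)
  rw [M.J_J, g_neg_right] at m8
  have m9 := M.m1 Z X Y
  have m10 := M.m1 (M.J Z) X (M.J Y)
  rw [M.J_J, g_neg_right] at m10
  linear_combination m0 - c1 - c2 + c3 + m5 - c6 + m7 - m8 - m9 + m10

/-- the quasi-Kähler condition: `(∇_{JX}J)Y = −J (∇_X J)Y` -/
lemma QK (X Y : M.V) : M.nablaJ (M.J X) Y = - M.J (M.nablaJ X Y) := by
  have h : ∀ Z, M.g (M.nablaJ (M.J X) Y + M.J (M.nablaJ X Y)) Z = 0 := by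
    intro Z
    rw [M.g_add_left]
    have h1 := M.QK_T X Y Z
    have h2 := M.gJ_skew (M.nablaJ X Y) Z
    linear_combination h1 + h2
  have h0 := M.g_nondeg _ h
  linear_combination (norm := abel) h0

end AlmostKahler

namespace AlmostKahler

variable (M : AlmostKahler)

lemma csmul_neg (c : ℂ) (X : M.V) : M.csmul (-c) X = - M.csmul c X := by
  unfold csmul; rw [map_neg, neg_smul]

lemma cF_neg_one : M.cF (-1) = -1 := by rw [cF_neg, cF_one]

lemma conj_antiholo {Z : M.V} (h : M.IsHolo Z) :
    M.J (M.conjV Z) = M.csmul (-Complex.I) (M.conjV Z) := by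
  unfold IsHolo at h
  rw [← M.J_conj, h]
  unfold csmul
  rw [M.conjV_smul, M.conjF_algebraMap, Complex.conj_I]

lemma D2holo (X : M.V) {Y : M.V} (hY : M.J Y = M.csmul Complex.I Y) :
    M.J (M.nablaJ X Y) = M.csmul (-Complex.I) (M.nablaJ X Y) := by
  have h := M.nablaJ_J X Y
  rw [hY, nablaJ_csmul₂] at h
  rw [csmul_neg, h, neg_neg]

lemma D2anti (X : M.V) {Y : M.V} (hY : M.J Y = M.csmul (-Complex.I) Y) :
    M.J (M.nablaJ X Y) = M.csmul Complex.I (M.nablaJ X Y) := by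
  have h := M.nablaJ_J X Y
  rw [hY, nablaJ_csmul₂, csmul_neg] at h
  exact (neg_inj.mp h).symm

lemma D1holo {X : M.V} (Y : M.V) (hX : M.J X = M.csmul Complex.I X) :
    M.J (M.nablaJ X Y) = M.csmul (-Complex.I) (M.nablaJ X Y) := by
  have h := M.QK X Y
  rw [hX, nablaJ_csmul₁] at h
  rw [csmul_neg, h, neg_neg]

lemma D1anti {X : M.V} (Y : M.V) (hX : M.J X = M.csmul (-Complex.I) X) :
    M.J (M.nablaJ X Y) = M.csmul Complex.I (M.nablaJ X Y) := by
  have h := M.QK X Y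
  rw [hX, nablaJ_csmul₁, csmul_neg] at h
  exact (neg_inj.mp h).symm

lemma Dmixed1 {X Y : M.V} (hX : M.J X = M.csmul Complex.I X)
    (hY : M.J Y = M.csmul (-Complex.I) Y) : M.nablaJ X Y = 0 := by
  have h1 := M.D1holo Y hX
  have h2 := M.D2anti X hY
  exact M.csmul_cancel _ _ _ (by norm_num [Complex.ext_iff]) (h1.symm.trans h2)

lemma Dmixed2 {X Y : M.V} (hX : M.J X = M.csmul (-Complex.I) X)
    (hY : M.J Y = M.csmul Complex.I Y) : M.nablaJ X Y = 0 := by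
  have h1 := M.D1anti Y hX
  have h2 := M.D2holo X hY
  exact M.csmul_cancel _ _ _ (by norm_num [Complex.ext_iff]) (h1.symm.trans h2)

lemma g_pure {A B : M.V} {c : ℂ} (hc : c * c = -1)
    (hA : M.J A = M.csmul c A) (hB : M.J B = M.csmul c B) : M.g A B = 0 := by
  have h := M.g_J A B
  rw [hA, hB, g_csmul_left, g_csmul_right] at h
  have hi : M.cF c * M.cF c = -1 := by rw [cF_mul, hc, cF_neg_one]
  apply M.half _ 0
  linear_combination M.g A B * hi - h

lemma nabla_pure {V : M.V} {c : ℂ} (X : M.V) (hV : M.J V = M.csmul c V)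
    (hD : M.nablaJ X V = 0) :
    M.J (M.nabla X V) = M.csmul c (M.nabla X V) := by
  have h : M.J (M.nabla X V) = M.nabla X (M.J V) - M.nablaJ X V := by
    unfold nablaJ; abel
  rw [h, hD, sub_zero, hV, nabla_csmul_right]

lemma B_eq (X Y : M.V) :
    M.B X Y = M.J (M.nablaJ X Y) + M.J (M.nablaJ X Y) := by
  unfold B
  rw [M.QK]
  abel

end AlmostKahler

namespace AlmostKahler

variable (M : AlmostKahler)

/-- reduction of `g(∇_X V, S)` for `V, S` of the same pure type -/
lemma red (X : M.V) {V S : M.V} {c : ℂ} (hc : c * c = -1)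
    (hV : M.J V = M.csmul c V) (hS : M.J S = M.csmul c S) :
    M.g (M.nabla X V) S + M.g (M.nabla X V) S
      = (- M.cF c) * M.g (M.nablaJ X V) S := by
  have k1 := (M.g_J (M.nabla X V) S).symm
  rw [hS, g_csmul_right] at k1
  have k2 : M.J (M.nabla X V) = M.csmul c (M.nabla X V) - M.nablaJ X V := by
    have h : M.J (M.nabla X V) = M.nabla X (M.J V) - M.nablaJ X V := by
      unfold nablaJ; abel
    rw [h, hV, nabla_csmul_right]
  have hcc : M.cF c * M.cF c = -1 := by rw [cF_mul, hc, cF_neg_one]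
  rw [k2, g_sub_left, g_csmul_left] at k1
  linear_combination k1 + M.g (M.nabla X V) S * hcc

end AlmostKahler


/-- Let `(M,g,J,κ)` be an almost Kähler manifold, `B(X,Y) = J(∇_X J)Y − (∇_{JX} J)Y`,
and `L(X,Y,Z,W) = g((∇_X B)(Y,Z), W)`.  Then for any `(1,0)`-vector fields
`Z_i, Z_j, Z_r, Z_s` one has `L(Z̄_i, Z_j, Z_r, Z̄_s) = L(Z_j, Z̄_i, Z̄_s, Z_r)`, and
moreover `L(Z_i, Z̄_j, Z_r, Z_s) = L(Z_i, Z_j, Z̄_r, Z_s) = L(Z_i, Z_j, Z_r, Z̄_s) = 0`. -/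
theorem L_identities (M : AlmostKahler) (Zi Zj Zr Zs : M.V)
    (hi : M.IsHolo Zi) (hj : M.IsHolo Zj) (hr : M.IsHolo Zr) (hs : M.IsHolo Zs) :
    M.L (M.conjV Zi) Zj Zr (M.conjV Zs) = M.L Zj (M.conjV Zi) (M.conjV Zs) Zr ∧
    M.L Zi (M.conjV Zj) Zr Zs = 0 ∧
    M.L Zi Zj (M.conjV Zr) Zs = 0 ∧
    M.L Zi Zj Zr (M.conjV Zs) = 0 := by
  have hi' : M.J Zi = M.csmul Complex.I Zi := hi
  have hj' : M.J Zj = M.csmul Complex.I Zj := hj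
  have hr' : M.J Zr = M.csmul Complex.I Zr := hr
  have hs' : M.J Zs = M.csmul Complex.I Zs := hs
  set ci := M.conjV Zi with hci_def
  set cj := M.conjV Zj with hcj_def
  set cr := M.conjV Zr with hcr_def
  set cs := M.conjV Zs with hcs_def
  have hci : M.J ci = M.csmul (-Complex.I) ci := M.conj_antiholo hi
  have hcj : M.J cj = M.csmul (-Complex.I) cj := M.conj_antiholo hj
  have hcr : M.J cr = M.csmul (-Complex.I) cr := M.conj_antiholo hr
  have hcs : M.J cs = M.csmul (-Complex.I) cs := M.conj_antiholo hs
  have hII : Complex.I * Complex.I = -1 := Complex.I_mul_I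
  have hII' : (-Complex.I) * (-Complex.I) = -1 := by
    rw [neg_mul_neg, Complex.I_mul_I]
  refine ⟨?_, ?_, ?_, ?_⟩
  · -- L(ci, Zj, Zr, cs) = L(Zj, ci, cs, Zr)
    unfold AlmostKahler.L AlmostKahler.nablaB
    -- terms 2 and 3 on each side vanish
    have e2 : M.g (M.B (M.nabla ci Zj) Zr) cs = 0 := by
      rw [M.B_eq, M.g_add_left, M.D2holo _ hr', M.g_csmul_left,
          M.g_pure hII' (M.D2holo _ hr') hcs, mul_zero, add_zero]
    have e3 : M.g (M.B Zj (M.nabla ci Zr)) cs = 0 := by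
      rw [M.B_eq, M.g_add_left, M.D1holo _ hj', M.g_csmul_left,
          M.g_pure hII' (M.D1holo _ hj') hcs, mul_zero, add_zero]
    have f2 : M.g (M.B (M.nabla Zj ci) cs) Zr = 0 := by
      rw [M.B_eq, M.g_add_left, M.D2anti _ hcs, M.g_csmul_left,
          M.g_pure hII (M.D2anti _ hcs) hr', mul_zero, add_zero]
    have f3 : M.g (M.B ci (M.nabla Zj cs)) Zr = 0 := by
      rw [M.B_eq, M.g_add_left, M.D1anti _ hci, M.g_csmul_left,
          M.g_pure hII (M.D1anti _ hci) hr', mul_zero, add_zero]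
    -- main terms
    have hV : M.J (M.nablaJ Zj Zr) = M.csmul (-Complex.I) (M.nablaJ Zj Zr) :=
      M.D2holo _ hr'
    have e1 : M.g (M.nabla ci (M.B Zj Zr)) cs
        = M.g (M.nablaJ ci (M.nablaJ Zj Zr)) cs := by
      rw [M.B_eq, hV, M.nabla_add_right, M.nabla_csmul_right, M.g_add_left,
          M.g_csmul_left]
      have hred := M.red ci hII' hV hcs
      have hcc : M.cF (-Complex.I) * M.cF (-Complex.I) = -1 := by
        rw [M.cF_mul, hII', M.cF_neg_one]
      linear_combination M.cF (-Complex.I) * hred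
        - M.g (M.nablaJ ci (M.nablaJ Zj Zr)) cs * hcc
    have hU : M.J (M.nablaJ ci cs) = M.csmul Complex.I (M.nablaJ ci cs) :=
      M.D1anti _ hci
    have f1 : M.g (M.nabla Zj (M.B ci cs)) Zr
        = M.g (M.nablaJ Zj (M.nablaJ ci cs)) Zr := by
      rw [M.B_eq, hU, M.nabla_add_right, M.nabla_csmul_right, M.g_add_left,
          M.g_csmul_left]
      have hred := M.red Zj hII hU hr'
      have hcc : M.cF Complex.I * M.cF Complex.I = -1 := by
        rw [M.cF_mul, hII, M.cF_neg_one]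
      linear_combination M.cF Complex.I * hred
        - M.g (M.nablaJ Zj (M.nablaJ ci cs)) Zr * hcc
    have key : M.g (M.nablaJ ci (M.nablaJ Zj Zr)) cs
        = M.g (M.nablaJ Zj (M.nablaJ ci cs)) Zr := by
      have k1 := M.D_skew ci (M.nablaJ Zj Zr) cs
      have k2 := M.D_skew Zj (M.nablaJ ci cs) Zr
      have k3 := M.g_symm (M.nablaJ Zj Zr) (M.nablaJ ci cs)
      linear_combination k1 - k2 - k3
    rw [M.g_sub_left, M.g_sub_left, M.g_sub_left, M.g_sub_left, e1, e2, e3, f1, f2, f3]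
    linear_combination key
  · -- L(Zi, cj, Zr, Zs) = 0
    unfold AlmostKahler.L AlmostKahler.nablaB
    have e1 : M.B cj Zr = 0 := by
      rw [M.B_eq, M.Dmixed2 hcj hr', M.J_zero, add_zero]
    have e2 : M.B (M.nabla Zi cj) Zr = 0 := by
      have hw := M.nabla_pure Zi hcj (M.Dmixed1 hi' hcj)
      rw [M.B_eq, M.Dmixed2 hw hr', M.J_zero, add_zero]
    have e3 : M.g (M.B cj (M.nabla Zi Zr)) Zs = 0 := by
      rw [M.B_eq, M.g_add_left, M.D1anti _ hcj, M.g_csmul_left,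
          M.g_pure hII (M.D1anti _ hcj) hs', mul_zero, add_zero]
    rw [M.g_sub_left, M.g_sub_left, e1, M.nabla_zero_right, e2, e3, M.g_zero_left]
    ring
  · -- L(Zi, Zj, cr, Zs) = 0
    unfold AlmostKahler.L AlmostKahler.nablaB
    have e1 : M.B Zj cr = 0 := by
      rw [M.B_eq, M.Dmixed1 hj' hcr, M.J_zero, add_zero]
    have e2 : M.g (M.B (M.nabla Zi Zj) cr) Zs = 0 := by
      rw [M.B_eq, M.g_add_left, M.D2anti _ hcr, M.g_csmul_left,
          M.g_pure hII (M.D2anti _ hcr) hs', mul_zero, add_zero]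
    have e3 : M.B Zj (M.nabla Zi cr) = 0 := by
      have hv := M.nabla_pure Zi hcr (M.Dmixed1 hi' hcr)
      rw [M.B_eq, M.Dmixed1 hj' hv, M.J_zero, add_zero]
    rw [M.g_sub_left, M.g_sub_left, e1, M.nabla_zero_right, e3, e2, M.g_zero_left]
    ring
  · -- L(Zi, Zj, Zr, cs) = 0
    unfold AlmostKahler.L AlmostKahler.nablaB
    have hV : M.J (M.nablaJ Zj Zr) = M.csmul (-Complex.I) (M.nablaJ Zj Zr) :=
      M.D2holo _ hr'
    have e1 : M.g (M.nabla Zi (M.B Zj Zr)) cs = 0 := by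
      have hp : M.J (M.nabla Zi (M.nablaJ Zj Zr))
          = M.csmul (-Complex.I) (M.nabla Zi (M.nablaJ Zj Zr)) :=
        M.nabla_pure Zi hV (M.Dmixed1 hi' hV)
      rw [M.B_eq, hV, M.nabla_add_right, M.nabla_csmul_right, M.g_add_left,
          M.g_csmul_left, M.g_pure hII' hp hcs, mul_zero, add_zero]
    have e2 : M.g (M.B (M.nabla Zi Zj) Zr) cs = 0 := by
      rw [M.B_eq, M.g_add_left, M.D2holo _ hr', M.g_csmul_left,
          M.g_pure hII' (M.D2holo _ hr') hcs, mul_zero, add_zero]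
    have e3 : M.g (M.B Zj (M.nabla Zi Zr)) cs = 0 := by
      rw [M.B_eq, M.g_add_left, M.D1holo _ hj', M.g_csmul_left,
          M.g_pure hII' (M.D1holo _ hj') hcs, mul_zero, add_zero]
    rw [M.g_sub_left, M.g_sub_left, e1, e2, e3]
    ring
end
end
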